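/- arXiv:math/0507494 — 2 statements merged into one kernel-verified Lean document; each statement's English description precedes it below -/
import Mathlib

section
/- In the conifold algebra Λ_c, the element D = XYZ − YXZ satisfies D² = 4(z² − xy), where x = X², y = Y², z = ½(XY+YX). -/
open FreeAlgebra

/-- The defining relations of the conifold algebra
`ℂ⟨X,Y,Z⟩/(Z²-1, XZ+ZX, YZ+ZY, [X²,Y], [Y²,X])`, with generators indexed
`0 = X`, `1 = Y`, `2 = Z`. -/
inductive ConifoldRel : FreeAlgebra ℂ (Fin 3) → FreeAlgebra ℂ (Fin 3) → Prop
  | z2 : ConifoldRel (ι ℂ (2 : Fin 3) * ι ℂ 2) 1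
  | xz : ConifoldRel (ι ℂ (0 : Fin 3) * ι ℂ 2 + ι ℂ 2 * ι ℂ 0) 0
  | yz : ConifoldRel (ι ℂ (1 : Fin 3) * ι ℂ 2 + ι ℂ 2 * ι ℂ 1) 0
  | x2y : ConifoldRel (ι ℂ (0 : Fin 3) * ι ℂ 0 * ι ℂ 1) (ι ℂ 1 * (ι ℂ 0 * ι ℂ 0))
  | y2x : ConifoldRel (ι ℂ (1 : Fin 3) * ι ℂ 1 * ι ℂ 0) (ι ℂ 0 * (ι ℂ 1 * ι ℂ 1))

/-- The conifold algebra `Λ_c`. -/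
abbrev ConifoldAlgebra := RingQuot ConifoldRel

/-- The generator `X` of the conifold algebra. -/
noncomputable def Xc : ConifoldAlgebra := RingQuot.mkAlgHom ℂ ConifoldRel (ι ℂ 0)

/-- The generator `Y` of the conifold algebra. -/
noncomputable def Yc : ConifoldAlgebra := RingQuot.mkAlgHom ℂ ConifoldRel (ι ℂ 1)

/-- The generator `Z` of the conifold algebra. -/
noncomputable def Zc : ConifoldAlgebra := RingQuot.mkAlgHom ℂ ConifoldRel (ι ℂ 2)

lemma conifold_hZ : Zc * Zc = 1 := by
  have := RingQuot.mkAlgHom_rel ℂ ConifoldRel.z2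
  simpa [Zc, map_mul, map_one] using this

lemma conifold_hZX : Zc * Xc = -(Xc * Zc) := by
  have := RingQuot.mkAlgHom_rel ℂ ConifoldRel.xz
  simp only [map_add, map_mul, map_zero] at this
  rw [add_comm] at this
  exact eq_neg_of_add_eq_zero_left this

lemma conifold_hZY : Zc * Yc = -(Yc * Zc) := by
  have := RingQuot.mkAlgHom_rel ℂ ConifoldRel.yz
  simp only [map_add, map_mul, map_zero] at this
  rw [add_comm] at this
  exact eq_neg_of_add_eq_zero_left this

lemma conifold_hxxy : Xc * Xc * Yc = Yc * (Xc * Xc) := by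
  have := RingQuot.mkAlgHom_rel ℂ ConifoldRel.x2y
  simpa [Xc, Yc, map_mul] using this

lemma conifold_hyyx : Yc * Yc * Xc = Xc * (Yc * Yc) := by
  have := RingQuot.mkAlgHom_rel ℂ ConifoldRel.y2x
  simpa [Xc, Yc, map_mul] using this

lemma cneg_mul (a b : ConifoldAlgebra) : -a * b = -(a * b) := neg_mul a b

lemma cmul_neg (a b : ConifoldAlgebra) : a * -b = -(a * b) := mul_neg a b

lemma cneg_neg (a : ConifoldAlgebra) : - -a = a := neg_neg a

lemma conifold_hZa : Zc * (Xc * Yc) = Xc * Yc * Zc := by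
  calc Zc * (Xc * Yc) = (Zc * Xc) * Yc := by rw [mul_assoc]
    _ = -(Xc * (Zc * Yc)) := by rw [conifold_hZX, cneg_mul, mul_assoc]
    _ = Xc * Yc * Zc := by rw [conifold_hZY, cmul_neg, cneg_neg, mul_assoc]

lemma conifold_hZb : Zc * (Yc * Xc) = Yc * Xc * Zc := by
  calc Zc * (Yc * Xc) = (Zc * Yc) * Xc := by rw [mul_assoc]
    _ = -(Yc * (Zc * Xc)) := by rw [conifold_hZY, cneg_mul, mul_assoc]
    _ = Yc * Xc * Zc := by rw [conifold_hZX, cmul_neg, cneg_neg, mul_assoc]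

lemma conifold_key (C D : ConifoldAlgebra) (_hC : Zc * C = C * Zc) (hD : Zc * D = D * Zc) :
    (C * Zc) * (D * Zc) = C * D := by
  calc C * Zc * (D * Zc) = C * (Zc * D) * Zc := by noncomm_ring
    _ = C * D * (Zc * Zc) := by rw [hD]; noncomm_ring
    _ = C * D := by rw [conifold_hZ, mul_one]

lemma conifold_hab : (Xc * Yc) * (Yc * Xc) = (Xc * Xc) * (Yc * Yc) := by
  calc Xc * Yc * (Yc * Xc) = Xc * (Yc * Yc * Xc) := by noncomm_ring
    _ = Xc * (Xc * (Yc * Yc)) := by rw [conifold_hyyx]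
    _ = (Xc * Xc) * (Yc * Yc) := by noncomm_ring

lemma conifold_hba : (Yc * Xc) * (Xc * Yc) = (Xc * Xc) * (Yc * Yc) := by
  calc Yc * Xc * (Xc * Yc) = (Yc * (Xc * Xc)) * Yc := by noncomm_ring
    _ = (Xc * Xc * Yc) * Yc := by rw [← conifold_hxxy]
    _ = (Xc * Xc) * (Yc * Yc) := by noncomm_ring

lemma conifold_h4 (w : ConifoldAlgebra) : (4 : ConifoldAlgebra) * ((1/4 : ℂ) • w) = w := by
  rw [mul_smul_comm, show (4 : ConifoldAlgebra) * w = (4 : ℂ) • w by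
    rw [Algebra.smul_def, map_ofNat], smul_smul]
  norm_num

/-- In the conifold algebra, `D = XYZ - YXZ` satisfies `D² = 4(z² - xy)`, where
`x = X²`, `y = Y²` and `z = ½(XY + YX)`. -/
theorem conifold_D_squared :
    (Xc * Yc * Zc - Yc * Xc * Zc) * (Xc * Yc * Zc - Yc * Xc * Zc) =
      4 * ((((1 : ℂ)/2) • (Xc * Yc + Yc * Xc)) * (((1 : ℂ)/2) • (Xc * Yc + Yc * Xc)) -
        (Xc * Xc) * (Yc * Yc)) := by
  have hRHS : (4 : ConifoldAlgebra) *
      ((((1 : ℂ)/2) • (Xc * Yc + Yc * Xc)) * (((1 : ℂ)/2) • (Xc * Yc + Yc * Xc)) -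
        (Xc * Xc) * (Yc * Yc)) =
      (Xc * Yc + Yc * Xc) * (Xc * Yc + Yc * Xc) - 4 * ((Xc * Xc) * (Yc * Yc)) := by
    rw [smul_mul_smul_comm, show ((1:ℂ)/2*((1:ℂ)/2)) = 1/4 from by norm_num, mul_sub,
      conifold_h4]
  rw [hRHS]
  calc (Xc * Yc * Zc - Yc * Xc * Zc) * (Xc * Yc * Zc - Yc * Xc * Zc)
      = (Xc * Yc * Zc) * (Xc * Yc * Zc) - (Xc * Yc * Zc) * (Yc * Xc * Zc)
        - (Yc * Xc * Zc) * (Xc * Yc * Zc) + (Yc * Xc * Zc) * (Yc * Xc * Zc) := by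
        rw [sub_mul, mul_sub, mul_sub]; abel
    _ = (Xc * Yc) * (Xc * Yc) - (Xc * Yc) * (Yc * Xc) - (Yc * Xc) * (Xc * Yc)
        + (Yc * Xc) * (Yc * Xc) := by
        rw [conifold_key _ _ conifold_hZa conifold_hZa,
          conifold_key _ _ conifold_hZa conifold_hZb,
          conifold_key _ _ conifold_hZb conifold_hZa,
          conifold_key _ _ conifold_hZb conifold_hZb]
    _ = (Xc * Yc) * (Xc * Yc) + (Yc * Xc) * (Yc * Xc)
        - 2 * ((Xc * Xc) * (Yc * Yc)) := by
        rw [conifold_hab, conifold_hba]; noncomm_ring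
    _ = (Xc * Yc + Yc * Xc) * (Xc * Yc + Yc * Xc) - 4 * ((Xc * Xc) * (Yc * Yc)) := by
        rw [show (Xc * Yc + Yc * Xc) * (Xc * Yc + Yc * Xc)
            = (Xc * Yc) * (Xc * Yc) + (Xc * Yc) * (Yc * Xc) + (Yc * Xc) * (Xc * Yc)
              + (Yc * Xc) * (Yc * Xc) from by noncomm_ring,
          conifold_hab, conifold_hba]
        noncomm_ring
end

section
/- The elements x = X², y = Y², z = ½(XY+YX) of the algebra S = ℂ⟨X,Y⟩/([X²,Y],[Y²,X]) are central, and S is a free module over the subalgebra ℂ[x,y,z] with basis {1, X, Y, XY}. -/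
open FreeAlgebra

set_option maxHeartbeats 1000000
set_option synthInstance.maxHeartbeats 200000

/-- The defining relations of `S = ℂ⟨X,Y⟩/([X²,Y],[Y²,X])`, generators `0 = X`, `1 = Y`. -/
inductive SRel : FreeAlgebra ℂ (Fin 2) → FreeAlgebra ℂ (Fin 2) → Prop
  | x2y : SRel (ι ℂ (0 : Fin 2) * ι ℂ 0 * ι ℂ 1) (ι ℂ 1 * (ι ℂ 0 * ι ℂ 0))
  | y2x : SRel (ι ℂ (1 : Fin 2) * ι ℂ 1 * ι ℂ 0) (ι ℂ 0 * (ι ℂ 1 * ι ℂ 1))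

/-- The algebra `S = ℂ⟨X,Y⟩/([X²,Y],[Y²,X])`. -/
abbrev SAlg := RingQuot SRel

/-- The generator `X` of `S`. -/
noncomputable def Xs : SAlg := RingQuot.mkAlgHom ℂ SRel (ι ℂ 0)

/-- The generator `Y` of `S`. -/
noncomputable def Ys : SAlg := RingQuot.mkAlgHom ℂ SRel (ι ℂ 1)

noncomputable section Aux

lemma rel1 : Xs * Xs * Ys = Ys * (Xs * Xs) := by
  simpa [Xs, Ys, map_mul] using RingQuot.mkAlgHom_rel ℂ SRel.x2y

lemma rel2 : Ys * Ys * Xs = Xs * (Ys * Ys) := by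
  simpa [Xs, Ys, map_mul] using RingQuot.mkAlgHom_rel ℂ SRel.y2x

def zS : SAlg := ((1 : ℂ)/2) • (Xs * Ys + Ys * Xs)

/-- every element of `SAlg` lies in the subalgebra generated by `Xs, Ys`. -/
lemma gen (s : SAlg) : s ∈ Algebra.adjoin ℂ ({Xs, Ys} : Set SAlg) := by
  obtain ⟨f, rfl⟩ := RingQuot.mkAlgHom_surjective ℂ SRel s
  induction f with
  | grade0 r => simpa using Subalgebra.algebraMap_mem _ r
  | grade1 i =>
    fin_cases i
    · exact Algebra.subset_adjoin (by simp [Xs])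
    · exact Algebra.subset_adjoin (by simp [Ys])
  | mul u v hu hv => rw [map_mul]; exact mul_mem hu hv
  | add u v hu hv => rw [map_add]; exact add_mem hu hv

lemma comm_of_gen {t : SAlg} (hX : t * Xs = Xs * t) (hY : t * Ys = Ys * t)
    (s : SAlg) : t * s = s * t := by
  induction gen s using Algebra.adjoin_induction with
  | mem u hu =>
    rcases hu with h | h
    · rw [h]; exact hX
    · rw [Set.mem_singleton_iff] at h; rw [h]; exact hY
  | algebraMap r => rw [Algebra.commutes]
  | add u v _ _ hu hv => rw [mul_add, add_mul, hu, hv]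
  | mul u v _ _ hu hv => rw [← mul_assoc, hu, mul_assoc, hv, mul_assoc]

lemma comm_x (s : SAlg) : (Xs * Xs) * s = s * (Xs * Xs) := by
  refine comm_of_gen ?_ ?_ s
  · rw [mul_assoc, ← mul_assoc]
  · exact rel1

lemma comm_y (s : SAlg) : (Ys * Ys) * s = s * (Ys * Ys) := by
  refine comm_of_gen ?_ ?_ s
  · exact rel2
  · rw [mul_assoc, ← mul_assoc]

lemma comm_z (s : SAlg) : zS * s = s * zS := by
  refine comm_of_gen ?_ ?_ s
  · rw [zS, smul_mul_assoc, mul_smul_comm]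
    congr 1
    rw [add_mul, mul_add, mul_assoc Ys Xs Xs, ← rel1, mul_assoc Xs Xs Ys,
      mul_assoc Xs Ys Xs, add_comm]
  · rw [zS, smul_mul_assoc, mul_smul_comm]
    congr 1
    rw [add_mul, mul_add, mul_assoc Xs Ys Ys, ← rel2, mul_assoc Ys Ys Xs,
      mul_assoc Ys Xs Ys, add_comm]

/-- the subalgebra `ℂ[x,y,z]`. -/
def Λ : Subalgebra ℂ SAlg :=
  Algebra.adjoin ℂ ({Xs * Xs, Ys * Ys, ((1 : ℂ)/2) • (Xs * Ys + Ys * Xs)} : Set SAlg)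

lemma central {u : SAlg} (hu : u ∈ Λ) (s : SAlg) : u * s = s * u := by
  induction hu using Algebra.adjoin_induction with
  | mem v hv =>
    rcases hv with h | h | h
    · rw [h]; exact comm_x s
    · rw [h]; exact comm_y s
    · rw [Set.mem_singleton_iff] at h; rw [h]; exact comm_z s
  | algebraMap r => rw [Algebra.commutes]
  | add u v _ _ hu hv => rw [add_mul, mul_add, hu, hv]
  | mul u v _ _ hu hv => rw [mul_assoc, hv, ← mul_assoc, hu, mul_assoc]

instance : CommRing Λ :=
  { (inferInstance : Ring Λ) with
    mul_comm := fun u v => Subtype.ext <| by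
      show (u : SAlg) * v = (v : SAlg) * u
      exact central u.2 v }

/-- The polynomial ring `ℂ[a,b,c]`. -/
abbrev Rp := MvPolynomial (Fin 3) ℂ
abbrev Mp := Fin 4 → Rp

def va : Rp := MvPolynomial.X 0
def vb : Rp := MvPolynomial.X 1
def vc : Rp := MvPolynomial.X 2

def ηΛ : Rp →ₐ[ℂ] Λ :=
  MvPolynomial.aeval
    ![⟨Xs * Xs, Algebra.subset_adjoin (by simp)⟩,
      ⟨Ys * Ys, Algebra.subset_adjoin (by simp)⟩,
      ⟨((1 : ℂ)/2) • (Xs * Ys + Ys * Xs), Algebra.subset_adjoin (by simp)⟩]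

def η : Rp →ₐ[ℂ] SAlg := Λ.val.comp ηΛ

lemma η_mem (r : Rp) : η r ∈ Λ := (ηΛ r).2

lemma η_va : η va = Xs * Xs := by
  show ((ηΛ va : Λ) : SAlg) = _
  rw [ηΛ, va, MvPolynomial.aeval_X]
  rfl

lemma η_vb : η vb = Ys * Ys := by
  show ((ηΛ vb : Λ) : SAlg) = _
  rw [ηΛ, vb, MvPolynomial.aeval_X]
  rfl

lemma η_vc : η vc = zS := by
  show ((ηΛ vc : Λ) : SAlg) = _
  rw [ηΛ, vc, MvPolynomial.aeval_X]
  rfl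

lemma Λ_le_range : Λ ≤ η.range := by
  apply Algebra.adjoin_le
  rintro u (h | h | h)
  · exact (AlgHom.mem_range _).mpr ⟨va, by rw [η_va, ← h]⟩
  · exact (AlgHom.mem_range _).mpr ⟨vb, by rw [η_vb, ← h]⟩
  · rw [Set.mem_singleton_iff] at h
    exact (AlgHom.mem_range _).mpr ⟨vc, by rw [η_vc, zS, ← h]⟩

lemma swap_η (q : Rp) (s t : SAlg) : s * (η q * t) = η q * (s * t) := by
  rw [← mul_assoc, ← central (η_mem q) s, mul_assoc]

-- the matrix model
def AX : Matrix (Fin 4) (Fin 4) Rp := !![0,va,0,0; 1,0,0,0; 0,0,0,va; 0,0,1,0]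
def AY : Matrix (Fin 4) (Fin 4) Rp :=
  !![0,2*vc,vb,0; 0,0,0,-vb; 1,0,0,2*vc; 0,-1,0,0]

lemma AX_sq : AX * AX = algebraMap Rp _ va := by
  ext i j : 2
  fin_cases i <;> fin_cases j <;>
    simp [AX, Matrix.mul_apply, Fin.sum_univ_four, Matrix.algebraMap_matrix_apply,
      Matrix.vecHead, Matrix.vecTail]

lemma AY_sq : AY * AY = algebraMap Rp _ vb := by
  ext i j : 2
  fin_cases i <;> fin_cases j <;>
    (simp [AY, Matrix.mul_apply, Fin.sum_univ_four, Matrix.algebraMap_matrix_apply,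
      Matrix.vecHead, Matrix.vecTail]; try ring)

lemma AXY : AX * AY + AY * AX = algebraMap Rp _ (2*vc) := by
  ext i j : 2
  fin_cases i <;> fin_cases j <;>
    (simp [AX, AY, Matrix.mul_apply, Fin.sum_univ_four, Matrix.algebraMap_matrix_apply,
      Matrix.vecHead, Matrix.vecTail]; try ring)

def LX : Module.End Rp Mp := Matrix.toLinAlgEquiv' AX
def LY : Module.End Rp Mp := Matrix.toLinAlgEquiv' AY

lemma LX_sq : LX * LX = algebraMap Rp _ va := by
  rw [LX, ← map_mul, AX_sq, AlgEquiv.commutes]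

lemma LY_sq : LY * LY = algebraMap Rp _ vb := by
  rw [LY, ← map_mul, AY_sq, AlgEquiv.commutes]

lemma LXY : LX * LY + LY * LX = algebraMap Rp _ (2*vc) := by
  rw [LX, LY, ← map_mul, ← map_mul, ← map_add, AXY, AlgEquiv.commutes]

def φ : SAlg →ₐ[ℂ] Module.End Rp Mp :=
  RingQuot.liftAlgHom ℂ ⟨FreeAlgebra.lift ℂ ![LX, LY], by
    intro x y h
    induction h with
    | x2y => simp only [map_mul, FreeAlgebra.lift_ι_apply, Matrix.cons_val_zero,
        Matrix.cons_val_one, Matrix.head_cons, LX_sq]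
             exact (Algebra.commutes va LY).symm ▸ rfl
    | y2x => simp only [map_mul, FreeAlgebra.lift_ι_apply, Matrix.cons_val_zero,
        Matrix.cons_val_one, Matrix.head_cons, LY_sq]
             exact (Algebra.commutes vb LX).symm ▸ rfl⟩

lemma φ_Xs : φ Xs = LX := by
  simp [φ, Xs, RingQuot.liftAlgHom_mkAlgHom_apply]

lemma φ_Ys : φ Ys = LY := by
  simp [φ, Ys, RingQuot.liftAlgHom_mkAlgHom_apply]

lemma φ_z : φ zS = algebraMap Rp _ vc := by
  have h1 : φ zS = ((1:ℂ)/2) • (LX * LY + LY * LX) := by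
    rw [zS, map_smul, map_add, map_mul, map_mul, φ_Xs, φ_Ys]
  have h2 : ((1:ℂ)/2) • ((IsScalarTower.toAlgHom ℂ Rp (Module.End Rp Mp)) (2*vc))
      = (IsScalarTower.toAlgHom ℂ Rp (Module.End Rp Mp)) (((1:ℂ)/2) • (2*vc)) :=
    (map_smul _ _ _).symm
  have h3 : ((1:ℂ)/2) • (2*vc : Rp) = vc := by
    rw [Algebra.smul_def, ← mul_assoc, ← map_ofNat (algebraMap ℂ Rp) 2, ← map_mul]
    norm_num
  rw [h1, LXY]
  calc ((1:ℂ)/2) • ((algebraMap Rp (Module.End Rp Mp)) (2*vc))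
      = ((1:ℂ)/2) • ((IsScalarTower.toAlgHom ℂ Rp (Module.End Rp Mp)) (2*vc)) := rfl
    _ = (IsScalarTower.toAlgHom ℂ Rp (Module.End Rp Mp)) (((1:ℂ)/2) • (2*vc)) := h2
    _ = algebraMap Rp _ vc := by rw [h3]; rfl

lemma φ_η (r : Rp) : φ (η r) = algebraMap Rp _ r := by
  have h : φ.comp η = IsScalarTower.toAlgHom ℂ Rp (Module.End Rp Mp) := by
    apply MvPolynomial.algHom_ext
    intro i
    fin_cases i
    · show φ (η (MvPolynomial.X 0)) = _
      rw [show (MvPolynomial.X 0 : Rp) = va from rfl, η_va, map_mul, φ_Xs, LX_sq]; rfl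
    · show φ (η (MvPolynomial.X 1)) = _
      rw [show (MvPolynomial.X 1 : Rp) = vb from rfl, η_vb, map_mul, φ_Ys, LY_sq]; rfl
    · show φ (η (MvPolynomial.X 2)) = _
      rw [show (MvPolynomial.X 2 : Rp) = vc from rfl, η_vc, φ_z]; rfl
  exact DFunLike.congr_fun h r

def B : Fin 4 → SAlg := ![1, Xs, Ys, Xs * Ys]

def e0 : Mp := Pi.single 0 1

lemma φB_e0 : ∀ i, φ (B i) e0 = Pi.single i (1 : Rp) := by
  have hX : ∀ v : Mp, φ Xs v = AX.mulVec v := fun v => by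
    rw [φ_Xs, LX]; rfl
  have hY : ∀ v : Mp, φ Ys v = AY.mulVec v := fun v => by
    rw [φ_Ys, LY]; rfl
  intro i
  fin_cases i
  · show φ 1 e0 = _
    rw [map_one]
    rfl
  · show φ Xs e0 = _
    rw [hX, e0, Matrix.mulVec_single]
    funext j
    fin_cases j <;> simp [AX, Pi.single_apply, Matrix.vecHead, Matrix.vecTail]
  · show φ Ys e0 = _
    rw [hY, e0, Matrix.mulVec_single]
    funext j
    fin_cases j <;> simp [AY, Pi.single_apply, Matrix.vecHead, Matrix.vecTail]
  · show φ (Xs * Ys) e0 = _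
    rw [map_mul, Module.End.mul_apply, hY, hX, e0, Matrix.mulVec_single]
    funext j
    fin_cases j <;>
      simp [AX, AY, Matrix.mulVec, dotProduct, Fin.sum_univ_four,
        Pi.single_apply, Matrix.vecHead, Matrix.vecTail]

lemma psi_rep (r : Fin 4 → Rp) :
    φ (∑ i, η (r i) * B i) e0 = fun j => r j := by
  rw [map_sum, LinearMap.sum_apply]
  have hterm : ∀ i, (φ (η (r i) * B i)) e0 = r i • (Pi.single i (1 : Rp) : Mp) := by
    intro i
    rw [map_mul, φ_η, Module.End.mul_apply, φB_e0]
    simp [Module.algebraMap_end_apply]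
  funext j
  rw [Finset.sum_apply]
  have hterm' : ∀ i ∈ Finset.univ, (φ (η (r i) * B i)) e0 j
      = if j = i then r i else 0 := by
    intro i _
    rw [hterm i]
    simp [Pi.single_apply]
  rw [Finset.sum_congr rfl hterm']
  simp

-- existence
def P (s : SAlg) : Prop := ∃ r : Fin 4 → Rp, s = ∑ i, η (r i) * B i

lemma P_one : P 1 := by
  refine ⟨![1, 0, 0, 0], ?_⟩
  simp [Fin.sum_univ_four, B]

lemma P_add {s t : SAlg} (hs : P s) (ht : P t) : P (s + t) := by
  obtain ⟨r, rfl⟩ := hs; obtain ⟨r', rfl⟩ := ht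
  refine ⟨r + r', ?_⟩
  rw [← Finset.sum_add_distrib]
  refine Finset.sum_congr rfl fun i _ => ?_
  rw [Pi.add_apply, map_add, add_mul]

lemma P_smul (q : ℂ) {s : SAlg} (hs : P s) : P (q • s) := by
  obtain ⟨r, rfl⟩ := hs
  refine ⟨fun i => q • r i, ?_⟩
  rw [Finset.smul_sum]
  refine Finset.sum_congr rfl fun i _ => ?_
  rw [map_smul, smul_mul_assoc]

lemma P_term (q : Rp) (i : Fin 4) : P (η q * B i) := by
  refine ⟨fun j => if j = i then q else 0, ?_⟩
  rw [Finset.sum_eq_single i]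
  · simp
  · intro j _ hj; simp [hj]
  · intro h; exact absurd (Finset.mem_univ i) h

lemma P_neg {s : SAlg} (hs : P s) : P (-s) := by
  obtain ⟨r, rfl⟩ := hs
  refine ⟨fun i => -(r i), ?_⟩
  rw [← Finset.sum_neg_distrib]
  exact Finset.sum_congr rfl fun i _ => by rw [map_neg]; exact (neg_mul (η (r i)) (B i)).symm

lemma P_X {s : SAlg} (hs : P s) : P (Xs * s) := by
  obtain ⟨r, rfl⟩ := hs
  rw [Fin.sum_univ_four, mul_add, mul_add, mul_add]
  simp only [B, Matrix.cons_val_zero, Matrix.cons_val_one, Matrix.head_cons,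
    Matrix.cons_val_two, Matrix.tail_cons, Matrix.cons_val_three]
  rw [swap_η, swap_η, swap_η, swap_η]
  refine P_add (P_add (P_add ?_ ?_) ?_) ?_
  · have h : Xs * (1 : SAlg) = B 1 := by rw [mul_one]; rfl
    rw [h]; exact P_term _ _
  · have h : η (r 1) * (Xs * Xs) = η (r 1 * va) * B 0 := by
      rw [← η_va, ← map_mul, show B 0 = 1 from rfl, mul_one]
    rw [h]; exact P_term _ _
  · have h : Xs * Ys = B 3 := rfl
    rw [h]; exact P_term _ _
  · have h : η (r 3) * (Xs * (Xs * Ys)) = η (r 3 * va) * B 2 := by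
      rw [← mul_assoc Xs Xs Ys, ← η_va, ← mul_assoc, ← map_mul,
        show B 2 = Ys from rfl]
    rw [h]; exact P_term _ _

lemma h2z : η (2*vc) = Xs * Ys + Ys * Xs := by
  have h : η (2*vc) = 2 * zS := by rw [map_mul, η_vc, map_ofNat]
  rw [h, zS, mul_smul_comm, two_mul, ← two_smul ℂ (Xs * Ys + Ys * Xs), smul_smul]
  norm_num

lemma hYX : Ys * Xs = η (2*vc) - Xs * Ys := by
  rw [h2z, add_sub_cancel_left]

lemma P_Y {s : SAlg} (hs : P s) : P (Ys * s) := by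
  obtain ⟨r, rfl⟩ := hs
  rw [Fin.sum_univ_four, mul_add, mul_add, mul_add]
  simp only [B, Matrix.cons_val_zero, Matrix.cons_val_one, Matrix.head_cons,
    Matrix.cons_val_two, Matrix.tail_cons, Matrix.cons_val_three]
  rw [swap_η, swap_η, swap_η, swap_η]
  refine P_add (P_add (P_add ?_ ?_) ?_) ?_
  · have h : Ys * (1 : SAlg) = B 2 := by rw [mul_one]; rfl
    rw [h]; exact P_term _ _
  · have h : η (r 1) * (Ys * Xs) = η (r 1 * (2*vc)) * B 0 + -(η (r 1) * B 3) := by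
      rw [hYX, mul_sub, ← map_mul]
      rw [show B 0 = 1 from rfl, mul_one, show B 3 = Xs * Ys from rfl, sub_eq_add_neg]
    rw [h]; exact P_add (P_term _ _) (P_neg (P_term _ _))
  · have h : η (r 2) * (Ys * Ys) = η (r 2 * vb) * B 0 := by
      rw [← η_vb, ← map_mul, show B 0 = 1 from rfl, mul_one]
    rw [h]; exact P_term _ _
  · have h : η (r 3) * (Ys * (Xs * Ys)) =
        η (r 3 * (2*vc)) * B 2 + -(η (r 3 * vb) * B 1) := by
      have hYXY : Ys * (Xs * Ys) = η (2*vc) * Ys - η vb * Xs := by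
        rw [← mul_assoc, hYX, sub_mul, mul_assoc, ← η_vb, central (η_mem vb) Xs]
      rw [hYXY, mul_sub, ← mul_assoc (η (r 3)) (η (2*vc)) Ys,
        ← map_mul η (r 3) (2*vc), ← mul_assoc (η (r 3)) (η vb) Xs,
        ← map_mul η (r 3) vb, show B 2 = Ys from rfl, show B 1 = Xs from rfl,
        sub_eq_add_neg]
    rw [h]; exact P_add (P_term _ _) (P_neg (P_term _ _))

lemma P_all (s : SAlg) : P s := by
  obtain ⟨f, rfl⟩ := RingQuot.mkAlgHom_surjective ℂ SRel s
  suffices h : ∀ g : FreeAlgebra ℂ (Fin 2), ∀ t, P t →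
      P (RingQuot.mkAlgHom ℂ SRel g * t) by
    simpa using h f 1 P_one
  intro g
  induction g with
  | grade0 q =>
    intro t ht
    rw [AlgHom.commutes, ← Algebra.smul_def]
    exact P_smul q ht
  | grade1 i =>
    intro t ht
    fin_cases i
    · exact P_X ht
    · exact P_Y ht
  | mul u v hu hv =>
    intro t ht
    rw [map_mul, mul_assoc]
    exact hu _ (hv _ ht)
  | add u v hu hv =>
    intro t ht
    rw [map_add, add_mul]
    exact P_add (hu _ ht) (hv _ ht)

end Aux

/-- The elements `x = X²`, `y = Y²`, `z = ½(XY+YX)` of `S` are central, and `S` is a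
free module over the subalgebra `ℂ[x,y,z]` with basis `{1, X, Y, XY}`: every element
of `S` is a unique `ℂ[x,y,z]`-linear combination of `1`, `X`, `Y`, `XY`. -/
theorem S_free_over_center :
    ((Xs * Xs) * Xs = Xs * (Xs * Xs) ∧ (Xs * Xs) * Ys = Ys * (Xs * Xs)) ∧
    ((Ys * Ys) * Xs = Xs * (Ys * Ys) ∧ (Ys * Ys) * Ys = Ys * (Ys * Ys)) ∧
    ((((1 : ℂ)/2) • (Xs * Ys + Ys * Xs)) * Xs = Xs * (((1 : ℂ)/2) • (Xs * Ys + Ys * Xs)) ∧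
     (((1 : ℂ)/2) • (Xs * Ys + Ys * Xs)) * Ys = Ys * (((1 : ℂ)/2) • (Xs * Ys + Ys * Xs))) ∧
    (∀ s : SAlg, ∃! c : Fin 4 →
        (Algebra.adjoin ℂ ({Xs * Xs, Ys * Ys, ((1 : ℂ)/2) • (Xs * Ys + Ys * Xs)} : Set SAlg)),
      s = ∑ i : Fin 4, (c i : SAlg) * ![1, Xs, Ys, Xs * Ys] i) := by
  refine ⟨⟨mul_assoc Xs Xs Xs, rel1⟩, ⟨rel2, mul_assoc Ys Ys Ys⟩,
    ⟨comm_z Xs, comm_z Ys⟩, ?_⟩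
  intro s
  obtain ⟨r, hr⟩ := P_all s
  refine ⟨fun i => ⟨η (r i), η_mem (r i)⟩, hr, ?_⟩
  intro c' hc'
  have hmem : ∀ i, ∃ x, η x = (c' i : SAlg) :=
    fun i => (AlgHom.mem_range _).mp (Λ_le_range (c' i).2)
  choose r' hr' using hmem
  have hsum : s = ∑ i, η (r' i) * B i := by
    rw [hc']
    exact Finset.sum_congr rfl fun i _ => by rw [← hr' i]; rfl
  have hvec : (fun j => r' j) = fun j => r j := by
    rw [← psi_rep r', ← psi_rep r, ← hr, ← hsum]
  funext i
  have hri : r' i = r i := congrFun hvec i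
  exact Subtype.ext (by rw [← hr' i, hri])
end
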